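/- Every compact convex body K ⊆ ℝ² with nonempty interior admits a chord [x₁, x₂] parallel to a direction ω of minimal breadth such that ⟨ω, x₁ − x₂⟩ = |x₁ − x₂| = width(K), and K is contained in the slab between the two hyperplanes orthogonal to ω through x₁ and x₂; equivalently, the section [x₁,x₂] is the orthogonal projection (shadow) of K in the direction ω^⊥. -/

import Mathlib

open scoped RealInnerProductSpace

/-- The support function `H_K(ω) = sup {⟨x, ω⟩ : x ∈ K}`. -/
noncomputable def suppFn (K : Set (EuclideanSpace ℝ (Fin 2)))
    (ω : EuclideanSpace ℝ (Fin 2)) : ℝ :=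
  sSup ((fun x => ⟪x, ω⟫) '' K)

/-- The breadth `B_K(ω) = H_K(ω) + H_K(-ω)`. -/
noncomputable def breadthFn (K : Set (EuclideanSpace ℝ (Fin 2)))
    (ω : EuclideanSpace ℝ (Fin 2)) : ℝ :=
  suppFn K ω + suppFn K (-ω)

/-- The width of `K`: the infimum of the breadth over unit directions. -/
noncomputable def widthFn (K : Set (EuclideanSpace ℝ (Fin 2))) : ℝ :=
  sInf (breadthFn K '' Metric.sphere (0 : EuclideanSpace ℝ (Fin 2)) 1)

open scoped Pointwise

/-! The difference body `K - K` is compact and convex, and its support function in a unit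
direction `u` is the breadth `B_K(u) ≥ width(K)`. Hence, for a unit direction `ω` of minimal
breadth, no direction separates `width(K) • ω` from `K - K`, so `width(K) • ω = x₁ - x₂` with
`x₁, x₂ ∈ K`. As `⟨ω, x₁ - x₂⟩ = H_K(ω) + H_K(-ω)`, the points `x₁` and `x₂` attain `H_K(ω)` and
`H_K(-ω)`, which is the slab condition. -/

theorem mem_of_forall_unit_exists_inner_le {E : Type*} [NormedAddCommGroup E]
    [InnerProductSpace ℝ E] [CompleteSpace E] {s : Set E} {x : E} (hs : Convex ℝ s)
    (hc : IsClosed s) (hne : s.Nonempty)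
    (h : ∀ u : E, ‖u‖ = 1 → ∃ y ∈ s, ⟪x, u⟫ ≤ ⟪y, u⟫) : x ∈ s := by
  rw [← iInter_halfSpaces_eq hs hc, Set.mem_iInter]
  intro l
  set v := (InnerProductSpace.toDual ℝ E).symm l
  have hl : ∀ z, l z = ⟪v, z⟫ := fun z => InnerProductSpace.toDual_symm_apply.symm
  simp only [Set.mem_ofPred_eq, hl]
  rcases eq_or_ne v 0 with hv | hv
  · obtain ⟨y, hy⟩ := hne
    exact ⟨y, hy, by simp [hv]⟩
  · obtain ⟨y, hy, hxy⟩ := h (‖v‖⁻¹ • v) (norm_smul_inv_norm hv)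
    simp only [real_inner_smul_right, real_inner_comm v] at hxy ⊢
    exact ⟨y, hy, le_of_mul_le_mul_left hxy (by positivity)⟩

section Breadth

variable {K : Set (EuclideanSpace ℝ (Fin 2))}

theorem inner_le_suppFn (hK : IsCompact K) {x : EuclideanSpace ℝ (Fin 2)} (hx : x ∈ K)
    (ω : EuclideanSpace ℝ (Fin 2)) : ⟪x, ω⟫ ≤ suppFn K ω :=
  le_csSup (hK.image (by fun_prop)).bddAbove (Set.mem_image_of_mem _ hx)

theorem exists_inner_eq_suppFn (hK : IsCompact K) (hne : K.Nonempty)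
    (ω : EuclideanSpace ℝ (Fin 2)) : ∃ x ∈ K, ⟪x, ω⟫ = suppFn K ω := by
  obtain ⟨x, hx, h⟩ :=
    hK.exists_sSup_image_eq hne (by fun_prop : Continuous fun x => ⟪x, ω⟫).continuousOn
  exact ⟨x, hx, h.symm⟩

theorem exists_inner_sub_eq_breadthFn (hK : IsCompact K) (hne : K.Nonempty)
    (ω : EuclideanSpace ℝ (Fin 2)) : ∃ a ∈ K, ∃ b ∈ K, ⟪a - b, ω⟫ = breadthFn K ω := by
  obtain ⟨a, ha, hωa⟩ := exists_inner_eq_suppFn hK hne ω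
  obtain ⟨b, hb, hωb⟩ := exists_inner_eq_suppFn hK hne (-ω)
  refine ⟨a, ha, b, hb, ?_⟩
  rw [breadthFn, ← hωa, ← hωb, inner_sub_left, inner_neg_right, sub_eq_add_neg]

theorem breadthFn_nonneg (hK : IsCompact K) (hne : K.Nonempty) (ω : EuclideanSpace ℝ (Fin 2)) :
    0 ≤ breadthFn K ω := by
  obtain ⟨x, hx⟩ := hne
  have h₁ := inner_le_suppFn hK hx ω
  have h₂ := inner_le_suppFn hK hx (-ω)
  rw [inner_neg_right] at h₂
  rw [breadthFn]
  linarith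

theorem continuous_breadthFn (hK : IsCompact K) : Continuous (breadthFn K) := by
  have hsupp : Continuous (suppFn K) :=
    hK.continuous_sSup (f := fun (ω x : EuclideanSpace ℝ (Fin 2)) => ⟪x, ω⟫)
      (continuous_snd.inner continuous_fst)
  exact hsupp.add (hsupp.comp continuous_neg)

theorem widthFn_le_breadthFn (hK : IsCompact K) (hne : K.Nonempty)
    {u : EuclideanSpace ℝ (Fin 2)} (hu : ‖u‖ = 1) : widthFn K ≤ breadthFn K u :=
  csInf_le ⟨0, Set.forall_mem_image.2 fun v _ => breadthFn_nonneg hK hne v⟩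
    (Set.mem_image_of_mem _ (by simpa using hu))

theorem exists_breadthFn_eq_widthFn (hK : IsCompact K) :
    ∃ ω : EuclideanSpace ℝ (Fin 2), ‖ω‖ = 1 ∧ breadthFn K ω = widthFn K := by
  obtain ⟨ω, hω, hmin⟩ :=
    (isCompact_sphere (0 : EuclideanSpace ℝ (Fin 2)) 1).exists_sInf_image_eq
      (NormedSpace.sphere_nonempty.2 zero_le_one) (continuous_breadthFn hK).continuousOn
  exact ⟨ω, by simpa using hω, hmin.symm⟩

theorem widthFn_smul_mem_sub (hK : IsCompact K) (hconv : Convex ℝ K) (hne : K.Nonempty)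
    {ω : EuclideanSpace ℝ (Fin 2)} (hω : ‖ω‖ = 1) (hmin : breadthFn K ω = widthFn K) :
    widthFn K • ω ∈ K - K := by
  have hw : 0 ≤ widthFn K := hmin ▸ breadthFn_nonneg hK hne ω
  have hclosed : IsClosed (K - K) := (sub_eq_add_neg K K ▸ hK.add hK.neg).isClosed
  refine mem_of_forall_unit_exists_inner_le (hconv.sub hconv) hclosed (hne.sub hne) fun u hu => ?_
  obtain ⟨a, ha, b, hb, hab⟩ := exists_inner_sub_eq_breadthFn hK hne u
  refine ⟨a - b, Set.sub_mem_sub ha hb, ?_⟩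
  calc ⟪widthFn K • ω, u⟫ ≤ ‖widthFn K • ω‖ * ‖u‖ := real_inner_le_norm _ _
    _ = widthFn K := by rw [norm_smul, hω, hu, Real.norm_of_nonneg hw, mul_one, mul_one]
    _ ≤ ⟪a - b, u⟫ := hab ▸ widthFn_le_breadthFn hK hne hu

theorem inner_mem_Icc_of_inner_sub_eq_breadthFn (hK : IsCompact K)
    {ω x₁ x₂ : EuclideanSpace ℝ (Fin 2)} (hx₁ : x₁ ∈ K) (hx₂ : x₂ ∈ K)
    (hchord : ⟪ω, x₁ - x₂⟫ = breadthFn K ω) {x : EuclideanSpace ℝ (Fin 2)} (hx : x ∈ K) :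
    ⟪ω, x⟫ ∈ Set.Icc ⟪ω, x₂⟫ ⟪ω, x₁⟫ := by
  have h₁ := inner_le_suppFn hK hx₁ ω
  have h₂ := inner_le_suppFn hK hx₂ (-ω)
  have h := inner_le_suppFn hK hx ω
  have h' := inner_le_suppFn hK hx (-ω)
  simp only [inner_neg_right, real_inner_comm ω] at h₁ h₂ h h'
  rw [breadthFn, inner_sub_right] at hchord
  exact ⟨by linarith, by linarith⟩

end Breadth

/-- Every planar compact convex body admits a chord `[x₁, x₂]`, parallel to a direction
`ω` of minimal breadth, with `⟨ω, x₁ - x₂⟩ = |x₁ - x₂| = width(K)`, such that `K` lies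
in the slab between the two lines orthogonal to `ω` through `x₁` and `x₂`
(equivalently, the section `[x₁,x₂]` is a shadow of `K` in direction `ω^⊥`). -/
theorem minimal_breadth_chord_shadow
    (K : Set (EuclideanSpace ℝ (Fin 2))) (hK : IsCompact K) (hconv : Convex ℝ K)
    (hint : (interior K).Nonempty) :
    ∃ ω : EuclideanSpace ℝ (Fin 2), ∃ x₁ ∈ K, ∃ x₂ ∈ K,
      ‖ω‖ = 1 ∧ breadthFn K ω = widthFn K ∧
      (∃ t : ℝ, x₁ - x₂ = t • ω) ∧
      ⟪ω, x₁ - x₂⟫ = ‖x₁ - x₂‖ ∧ ‖x₁ - x₂‖ = widthFn K ∧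
      ∀ x ∈ K, ⟪ω, x₂⟫ ≤ ⟪ω, x⟫ ∧ ⟪ω, x⟫ ≤ ⟪ω, x₁⟫ := by
  have hne : K.Nonempty := hint.mono interior_subset
  obtain ⟨ω, hω, hmin⟩ := exists_breadthFn_eq_widthFn hK
  obtain ⟨x₁, hx₁, x₂, hx₂, hx₁₂⟩ :=
    Set.mem_sub.1 (widthFn_smul_mem_sub hK hconv hne hω hmin)
  have hw : 0 ≤ widthFn K := hmin ▸ breadthFn_nonneg hK hne ω
  have hnorm : ‖x₁ - x₂‖ = widthFn K := by
    rw [hx₁₂, norm_smul, hω, Real.norm_of_nonneg hw, mul_one]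
  have hinner : ⟪ω, x₁ - x₂⟫ = widthFn K := by
    rw [hx₁₂, real_inner_smul_right, real_inner_self_eq_norm_sq, hω, one_pow, mul_one]
  refine ⟨ω, x₁, hx₁, x₂, hx₂, hω, hmin, ⟨_, hx₁₂⟩, hinner.trans hnorm.symm, hnorm,
    fun x hx => inner_mem_Icc_of_inner_sub_eq_breadthFn hK hx₁ hx₂ (hinner.trans hmin.symm) hx⟩
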